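/- (Theorem 2.1, first identity, q-case.) Let n ∈ ℕ, α₁, α₂ ∈ (0,1) and let m₁ be a natural number with m₁ ≤ n. Then the m₁-th q-factorial moment of the first coordinate of the q-trinomial distribution of the first kind satisfies ∑_{y₁=0}^{n} ∑_{y₂=0}^{n−y₁} [y₁]_{m₁,q} · f(y₁,y₂) = [n]_{m₁,q} · α₁^{m₁} · q^{b(m₁)} / ⟨1⊕α₁⟩_{m₁}. -/

import Mathlib

open Finset

/-- q-integer `[k]_q = (1 - q^k)/(1 - q)`. -/
noncomputable def qInt (q : ℝ) (k : ℤ) : ℝ := (1 - q ^ k) / (1 - q)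

/-- q-factorial `[n]_q! = ∏_{i=1}^n [i]_q`. -/
noncomputable def qFact (q : ℝ) (n : ℕ) : ℝ := ∏ i ∈ Finset.Icc 1 n, qInt q (i : ℤ)

/-- q-binomial coefficient `C_q(n,k)`. -/
noncomputable def qBinom (q : ℝ) (n k : ℕ) : ℝ := qFact q n / (qFact q k * qFact q (n - k))

/-- q-falling factorial `[u]_{m,q} = ∏_{i=1}^m [u-i+1]_q`. -/
noncomputable def qFall (q : ℝ) (u : ℤ) (m : ℕ) : ℝ := ∏ i ∈ Finset.Icc 1 m, qInt q (u - (i : ℤ) + 1)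

/-- `[k]_{q⁻¹} = q^{1-k} · [k]_q`. -/
noncomputable def qIntInv (q : ℝ) (k : ℤ) : ℝ := q ^ (1 - k) * qInt q k

/-- `[u]_{m,q⁻¹} = ∏_{i=1}^m [u-i+1]_{q⁻¹}`. -/
noncomputable def qFallInv (q : ℝ) (u : ℤ) (m : ℕ) : ℝ := ∏ i ∈ Finset.Icc 1 m, qIntInv q (u - (i : ℤ) + 1)

/-- `b(k) = k(k-1)/2`. -/
def bb (k : ℕ) : ℕ := k * (k - 1) / 2

/-- `⟨1 ⊕ α⟩_m = ∏_{i=1}^m (1 + α q^{i-1})`. -/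
noncomputable def oplus (q α : ℝ) (m : ℕ) : ℝ := ∏ i ∈ Finset.Icc 1 m, (1 + α * q ^ (i - 1))

/-- `⟨1 ⊖ β⟩_m = ∏_{i=1}^m (1 - β q^{i-1})`. -/
noncomputable def ominus (q β : ℝ) (m : ℕ) : ℝ := ∏ i ∈ Finset.Icc 1 m, (1 - β * q ^ (i - 1))

/-- q-trinomial coefficient `T_q(n; x₁, x₂)`. -/
noncomputable def qTri (q : ℝ) (n x1 x2 : ℕ) : ℝ :=
  qFact q n / (qFact q x1 * qFact q x2 * qFact q (n - x1 - x2))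

/-- pmf of the q-trinomial distribution of the first kind. -/
noncomputable def fpmf (q a1 a2 : ℝ) (n y1 y2 : ℕ) : ℝ :=
  qTri q n y1 y2 * a1 ^ y1 * a2 ^ y2 * q ^ (bb y1 + bb y2) /
    (oplus q a1 n * oplus q a2 (n - y1))

/-!
Summing out `y₂` is Gauss's q-binomial theorem `∑ₖ C_q(N,k) q^{b(k)} tᵏ = ⟨1⊕t⟩_N`
with `N = n - y₁`, `t = α₂`, which cancels the second normaliser. In the remaining sum over `y₁`,
the identities `[m+z]_{m,q} C_q(n,m+z) = [n]_{m,q} C_q(n-m,z)` and `b(m+z) = b(m) + mz + b(z)`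
turn the factorial moment into `[n]_{m,q} q^{b(m)} αᵐ` times Gauss's sum for `n - m` and
`t = α q^m`, that is `⟨1⊕α⟩_n / ⟨1⊕α⟩_m`.
-/

section QAnalogues

variable {q : ℝ}

lemma qInt_natCast_add (q : ℝ) (a b : ℕ) :
    qInt q ((a + b : ℕ) : ℤ) = qInt q (a : ℤ) + q ^ a * qInt q (b : ℤ) := by
  simp only [qInt, zpow_natCast, pow_add]
  ring

lemma qInt_natCast_ne_zero (hq : |q| ≠ 1) {k : ℕ} (hk : k ≠ 0) : qInt q (k : ℤ) ≠ 0 := by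
  have hq' : 1 - q ≠ 0 := fun h => hq (by rw [← sub_eq_zero.mp h, abs_one])
  have hqk : 1 - q ^ k ≠ 0 := fun h =>
    hq ((pow_eq_one_iff_of_nonneg (abs_nonneg q) hk).mp
      (by rw [pow_abs, ← sub_eq_zero.mp h, abs_one]))
  rw [qInt, zpow_natCast]
  exact div_ne_zero hqk hq'

lemma qInt_zero (q : ℝ) : qInt q 0 = 0 := by simp [qInt]

lemma qFact_zero (q : ℝ) : qFact q 0 = 1 := by simp [qFact]

lemma qFact_succ (q : ℝ) (n : ℕ) : qFact q (n + 1) = qFact q n * qInt q ((n + 1 : ℕ) : ℤ) :=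
  Finset.prod_Icc_succ_top (by omega) _

lemma qFact_ne_zero (hq : |q| ≠ 1) (n : ℕ) : qFact q n ≠ 0 :=
  Finset.prod_ne_zero_iff.mpr fun i hi =>
    qInt_natCast_ne_zero hq (by have := (Finset.mem_Icc.mp hi).1; omega)

lemma qBinom_zero_right (hq : |q| ≠ 1) (n : ℕ) : qBinom q n 0 = 1 := by
  rw [qBinom, qFact_zero, one_mul, Nat.sub_zero, div_self (qFact_ne_zero hq n)]

lemma qBinom_self (hq : |q| ≠ 1) (n : ℕ) : qBinom q n n = 1 := by
  rw [qBinom, Nat.sub_self, qFact_zero, mul_one, div_self (qFact_ne_zero hq n)]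

lemma qBinom_succ_succ (hq : |q| ≠ 1) {n k : ℕ} (hk : k < n) :
    qBinom q (n + 1) (k + 1) = qBinom q n (k + 1) + q ^ (n - k) * qBinom q n k := by
  obtain ⟨j, rfl⟩ := Nat.exists_eq_add_of_lt hk
  have hsplit : qInt q ((k + j + 1 + 1 : ℕ) : ℤ) =
      qInt q ((j + 1 : ℕ) : ℤ) + q ^ (j + 1) * qInt q ((k + 1 : ℕ) : ℤ) := by
    rw [← qInt_natCast_add, show k + j + 1 + 1 = j + 1 + (k + 1) by omega]
  simp only [qBinom, show k + j + 1 + 1 - (k + 1) = j + 1 by omega,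
    show k + j + 1 - (k + 1) = j by omega, show k + j + 1 - k = j + 1 by omega,
    qFact_succ q (k + j + 1), qFact_succ q j, qFact_succ q k, hsplit]
  have := qFact_ne_zero hq j
  have := qFact_ne_zero hq k
  have := qInt_natCast_ne_zero hq (k := j + 1) (by omega)
  have := qInt_natCast_ne_zero hq (k := k + 1) (by omega)
  field_simp

lemma qTri_eq_qBinom_mul_qBinom (hq : |q| ≠ 1) (n y1 y2 : ℕ) :
    qTri q n y1 y2 = qBinom q n y1 * qBinom q (n - y1) y2 := by
  have := qFact_ne_zero hq n
  have := qFact_ne_zero hq y1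
  have := qFact_ne_zero hq y2
  have := qFact_ne_zero hq (n - y1)
  have := qFact_ne_zero hq (n - y1 - y2)
  unfold qTri qBinom
  field_simp

lemma bb_succ (k : ℕ) : bb (k + 1) = bb k + k := by
  simp only [bb, ← Nat.choose_two_right, Nat.choose_succ_succ', Nat.choose_one_right]
  ring

lemma bb_add (m z : ℕ) : bb (m + z) = bb m + m * z + bb z := by
  induction z with
  | zero => simp [bb]
  | succ z ih => rw [← add_assoc, bb_succ, ih, bb_succ]; ring

lemma oplus_succ (q α : ℝ) (n : ℕ) : oplus q α (n + 1) = oplus q α n * (1 + α * q ^ n) :=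
  Finset.prod_Icc_succ_top (by omega) _

lemma oplus_add (q α : ℝ) (m d : ℕ) :
    oplus q α (m + d) = oplus q α m * oplus q (α * q ^ m) d := by
  induction d with
  | zero => simp [oplus]
  | succ d ih => rw [← add_assoc, oplus_succ, ih, oplus_succ, pow_add]; ring

lemma oplus_pos (hq : 0 ≤ q) {α : ℝ} (hα : 0 ≤ α) (m : ℕ) : 0 < oplus q α m :=
  Finset.prod_pos fun _ _ => by positivity

theorem sum_qBinom_mul_pow (hq : |q| ≠ 1) (n : ℕ) (t : ℝ) :
    ∑ k ∈ range (n + 1), qBinom q n k * q ^ bb k * t ^ k = oplus q t n := by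
  induction n with
  | zero => simp [qBinom_zero_right hq, bb, oplus]
  | succ n ih =>
    set T := fun n k => qBinom q n k * q ^ bb k * t ^ k
    have hpascal : ∀ k ∈ range n, T (n + 1) (k + 1) = T n (k + 1) + t * q ^ n * T n k := by
      intro k hk
      rw [Finset.mem_range] at hk
      have hexp : q ^ (n - k) * q ^ bb (k + 1) = q ^ n * q ^ bb k := by
        rw [← pow_add, ← pow_add, bb_succ]; congr 1; omega
      simp only [T, qBinom_succ_succ hq hk, pow_succ]
      linear_combination qBinom q n k * t ^ k * t * hexp
    have hfirst : T (n + 1) 0 = T n 0 := by simp [T, qBinom_zero_right hq]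
    have hlast : T (n + 1) (n + 1) = t * q ^ n * T n n := by
      simp only [T, qBinom_self hq, bb_succ, pow_add, pow_succ]; ring
    have hfront := Finset.sum_range_succ' (T n) n
    have hback := Finset.sum_range_succ (T n) n
    have ih' : ∑ k ∈ range (n + 1), T n k = oplus q t n := ih
    change ∑ k ∈ range (n + 2), T (n + 1) k = _
    rw [Finset.sum_range_succ', Finset.sum_range_succ, Finset.sum_congr rfl hpascal,
      Finset.sum_add_distrib, ← Finset.mul_sum, hfirst, hlast, oplus_succ]
    linear_combination (1 + t * q ^ n) * ih' - hfront - t * q ^ n * hback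

lemma qFall_succ (q : ℝ) (u : ℤ) (m : ℕ) :
    qFall q u (m + 1) = qFall q u m * qInt q (u - (m + 1 : ℕ) + 1) :=
  Finset.prod_Icc_succ_top (by omega) _

lemma qFall_natCast_of_lt (q : ℝ) {y m : ℕ} (h : y < m) : qFall q (y : ℤ) m = 0 := by
  refine Finset.prod_eq_zero (i := y + 1) (Finset.mem_Icc.mpr ⟨by omega, h⟩) ?_
  rw [show (y : ℤ) - ((y + 1 : ℕ) : ℤ) + 1 = 0 by push_cast; ring, qInt_zero]

lemma qFall_natCast_mul_qFact (q : ℝ) {y m : ℕ} (h : m ≤ y) :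
    qFall q (y : ℤ) m * qFact q (y - m) = qFact q y := by
  induction m with
  | zero => simp [qFall]
  | succ m ih =>
    have hy : y - m = y - (m + 1) + 1 := by omega
    rw [← ih (by omega), hy, qFact_succ, ← hy, qFall_succ,
      show (y : ℤ) - ((m + 1 : ℕ) : ℤ) + 1 = ((y - m : ℕ) : ℤ) by omega]
    ring

lemma qFall_natCast_mul_qBinom (hq : |q| ≠ 1) {n m z : ℕ} (h : m + z ≤ n) :
    qFall q ((m + z : ℕ) : ℤ) m * qBinom q n (m + z)
      = qFall q (n : ℤ) m * qBinom q (n - m) z := by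
  have hmz := qFall_natCast_mul_qFact q (Nat.le_add_right m z)
  have hn := qFall_natCast_mul_qFact q (le_of_add_le_left h)
  rw [Nat.add_sub_cancel_left] at hmz
  rw [eq_div_of_mul_eq (qFact_ne_zero hq z) hmz, eq_div_of_mul_eq (qFact_ne_zero hq (n - m)) hn]
  unfold qBinom
  rw [show n - (m + z) = n - m - z by omega]
  have := qFact_ne_zero hq (m + z)
  have := qFact_ne_zero hq z
  have := qFact_ne_zero hq (n - m)
  have := qFact_ne_zero hq (n - m - z)
  field_simp

theorem sum_qFall_mul_qBinom_mul_pow (hq : |q| ≠ 1) (t : ℝ) {n m : ℕ} (h : m ≤ n) :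
    ∑ y ∈ range (n + 1), qFall q (y : ℤ) m * (qBinom q n y * q ^ bb y * t ^ y)
      = qFall q (n : ℤ) m * q ^ bb m * t ^ m * oplus q (t * q ^ m) (n - m) := by
  have hterm : ∀ z ∈ range (n - m + 1),
      qFall q ((m + z : ℕ) : ℤ) m * (qBinom q n (m + z) * q ^ bb (m + z) * t ^ (m + z))
        = qFall q (n : ℤ) m * q ^ bb m * t ^ m
          * (qBinom q (n - m) z * q ^ bb z * (t * q ^ m) ^ z) := by
    intro z hz
    have hfall := qFall_natCast_mul_qBinom hq (n := n) (m := m) (z := z) (by simp at hz; omega)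
    rw [bb_add, mul_pow, ← pow_mul, pow_add, pow_add, pow_add]
    linear_combination q ^ bb m * q ^ (m * z) * q ^ bb z * t ^ m * t ^ z * hfall
  rw [show n + 1 = m + (n - m + 1) by omega, Finset.sum_range_add,
    Finset.sum_eq_zero fun y hy => by rw [qFall_natCast_of_lt q (Finset.mem_range.mp hy), zero_mul],
    zero_add, Finset.sum_congr rfl hterm, ← Finset.mul_sum, sum_qBinom_mul_pow hq]

lemma fpmf_eq_mul (hq : |q| ≠ 1) (a1 a2 : ℝ) (n y1 y2 : ℕ) :
    fpmf q a1 a2 n y1 y2 = qBinom q n y1 * q ^ bb y1 * a1 ^ y1 / oplus q a1 n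
      * (qBinom q (n - y1) y2 * q ^ bb y2 * a2 ^ y2 / oplus q a2 (n - y1)) := by
  rw [fpmf, qTri_eq_qBinom_mul_qBinom hq, pow_add]
  ring

lemma sum_fpmf_right (hq : |q| ≠ 1) (a1 a2 : ℝ) (n y1 : ℕ) (h : oplus q a2 (n - y1) ≠ 0) :
    ∑ y2 ∈ range (n - y1 + 1), fpmf q a1 a2 n y1 y2
      = qBinom q n y1 * q ^ bb y1 * a1 ^ y1 / oplus q a1 n := by
  simp_rw [fpmf_eq_mul hq, ← Finset.mul_sum, ← Finset.sum_div, sum_qBinom_mul_pow hq,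
    div_self h, mul_one]

end QAnalogues

theorem stmt0_general (q : ℝ) (hq0 : 0 < q) (hq1 : q < 1) (n : ℕ) (α1 α2 : ℝ)
    (hα1 : 0 < α1) (hα2 : 0 < α2)
    (m1 : ℕ) (hm1 : m1 ≤ n) :
    ∑ y1 ∈ Finset.range (n + 1), ∑ y2 ∈ Finset.range (n - y1 + 1),
      qFall q (y1 : ℤ) m1 * fpmf q α1 α2 n y1 y2
      = qFall q (n : ℤ) m1 * α1 ^ m1 * q ^ bb m1 / oplus q α1 m1 := by
  have hq : |q| ≠ 1 := by rw [abs_of_pos hq0]; exact hq1.ne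
  have hsplit := oplus_add q α1 m1 (n - m1)
  rw [Nat.add_sub_cancel' hm1] at hsplit
  have hhead := (oplus_pos hq0.le hα1.le m1).ne'
  have htail := (oplus_pos hq0.le (mul_pos hα1 (pow_pos hq0 m1)).le (n - m1)).ne'
  calc _ = (∑ y1 ∈ range (n + 1),
          qFall q (y1 : ℤ) m1 * (qBinom q n y1 * q ^ bb y1 * α1 ^ y1)) / oplus q α1 n := by
        simp_rw [← Finset.mul_sum, sum_fpmf_right hq α1 α2 n _ (oplus_pos hq0.le hα2.le _).ne',
          Finset.sum_div, mul_div_assoc]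
    _ = _ := by
        rw [sum_qFall_mul_qBinom_mul_pow hq α1 hm1, hsplit]
        field_simp

theorem stmt0 (q : ℝ) (hq0 : 0 < q) (hq1 : q < 1) (n : ℕ) (α1 α2 : ℝ)
    (hα1 : 0 < α1) (hα1' : α1 < 1) (hα2 : 0 < α2) (hα2' : α2 < 1)
    (m1 : ℕ) (hm1 : m1 ≤ n) :
    ∑ y1 ∈ Finset.range (n + 1), ∑ y2 ∈ Finset.range (n - y1 + 1),
      qFall q (y1 : ℤ) m1 * fpmf q α1 α2 n y1 y2
      = qFall q (n : ℤ) m1 * α1 ^ m1 * q ^ bb m1 / oplus q α1 m1 :=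
  stmt0_general q hq0 hq1 n α1 α2 hα1 hα2 m1 hm1
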